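/- arXiv:2103.10083 — 3 statements merged into one kernel-verified Lean document; each statement's English description precedes it below -/
import Mathlib

section
/- Let F, g : [0,S] → ℝ be continuous nonnegative functions, σ² ≥ 0, and K ≥ 0 a constant, such that F(t) ≤ 2σ² ∫₀ᵗ F(s) ds + ∫₀ᵗ g(s) √(2 F(s)) ds + K for all t ∈ [0,S]. Then √(F(t)) ≤ (1/√2) ∫₀ᵗ exp(σ²(t−s)) g(s) ds + exp(σ² t) √K for all t ∈ [0,S]. -/
/-!
With `ψ(t) := 2σ² ∫₀ᵗ F + ∫₀ᵗ g √(2F) + K` we have `F ≤ ψ`, so for `K > 0`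
`ψ' = 2σ² F + g √(2F) ≤ 2σ² ψ + √2 g √ψ`, i.e. `(√ψ)' ≤ σ² √ψ + g / √2`.
The linear comparison principle bounds `√ψ`, hence `√F ≤ √ψ`; the case `K = 0` follows
by letting `K + ε ↓ K`.
-/

open Real Set Filter Topology intervalIntegral

theorem le_exp_mul_add_integral_of_hasDerivAt_le {u u' h : ℝ → ℝ} {c a b : ℝ}
    (hh : Continuous h) (hu : ∀ t ∈ Icc a b, HasDerivAt u (u' t) t)
    (hle : ∀ t ∈ Icc a b, u' t ≤ c * u t + h t) :
    ∀ t ∈ Icc a b, u t ≤ exp (c * (t - a)) * u a + ∫ s in a..t, exp (c * (t - s)) * h s := by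
  have hH : Continuous fun s => exp (-c * s) * h s := by fun_prop
  set w : ℝ → ℝ := fun t => exp (-c * t) * u t - ∫ s in a..t, exp (-c * s) * h s
  have hw : ∀ t ∈ Icc a b,
      HasDerivAt w (-c * exp (-c * t) * u t + exp (-c * t) * u' t - exp (-c * t) * h t) t := by
    intro t ht
    have hexp : HasDerivAt (fun t => exp (-c * t)) (-c * exp (-c * t)) t := by
      simpa [mul_comm] using ((hasDerivAt_id t).const_mul (-c)).exp
    exact (hexp.mul (hu t ht)).sub (integral_hasDerivAt_right (hH.intervalIntegrable a t)
      hH.stronglyMeasurable.stronglyMeasurableAtFilter hH.continuousAt)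
  have hanti : AntitoneOn w (Icc a b) := by
    refine antitoneOn_of_deriv_nonpos (convex_Icc a b)
      (fun t ht => (hw t ht).continuousAt.continuousWithinAt) ?_ ?_ <;>
      intro t ht <;> rw [interior_Icc] at ht
    · exact (hw t (Ioo_subset_Icc_self ht)).differentiableAt.differentiableWithinAt
    · rw [(hw t (Ioo_subset_Icc_self ht)).deriv]
      nlinarith [hle t (Ioo_subset_Icc_self ht), exp_pos (-c * t)]
  intro t ht
  have hwt : exp (-c * t) * u t - ∫ s in a..t, exp (-c * s) * h s ≤ exp (-c * a) * u a := by
    simpa [w] using hanti ⟨le_rfl, ht.1.trans ht.2⟩ ht ht.1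
  have hint : ∫ s in a..t, exp (c * (t - s)) * h s
      = exp (c * t) * ∫ s in a..t, exp (-c * s) * h s := by
    rw [← integral_const_mul]
    refine integral_congr fun s _ => ?_
    simp only [← mul_assoc, ← exp_add]
    ring_nf
  have hexp : exp (c * (t - a)) = exp (c * t) * exp (-c * a) := by
    rw [← exp_add]; ring_nf
  have hinv : exp (c * t) * exp (-c * t) = 1 := by
    rw [← exp_add]; simp
  rw [hint, hexp]
  linear_combination exp (c * t) * hwt - u t * hinv

/-- The left side is `(√ψ)'` when `ψ' = 2σ² F + g √(2F)`. -/
theorem div_two_sqrt_le_of_le {σ2 F ψ g : ℝ} (hσ : 0 ≤ σ2) (hg : 0 ≤ g) (hψ : 0 < ψ)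
    (hFψ : F ≤ ψ) :
    (2 * σ2 * F + g * √(2 * F)) / (2 * √ψ) ≤ σ2 * √ψ + g / √2 := by
  have hsqrt2 : √2 * √2 = 2 := mul_self_sqrt zero_le_two
  have hsqrtψ : √ψ * √ψ = ψ := mul_self_sqrt hψ.le
  have hgF : g * √(2 * F) ≤ g * (√2 * √ψ) := by
    rw [← sqrt_mul zero_le_two]
    exact mul_le_mul_of_nonneg_left (sqrt_le_sqrt (by linarith)) hg
  have hrhs : (σ2 * √ψ + g / √2) * (2 * √ψ) = 2 * σ2 * ψ + g * (√2 * √ψ) := by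
    field_simp
    linear_combination (2 * σ2 * √2) * hsqrtψ - (g * √ψ) * hsqrt2
  rw [div_le_iff₀ (by positivity), hrhs]
  nlinarith

theorem sqrt_le_of_le_integral_of_pos {S σ2 K : ℝ} {F g : ℝ → ℝ} (hσ : 0 ≤ σ2) (hK : 0 < K)
    (hF : Continuous F) (hg : Continuous g)
    (hFpos : ∀ t ∈ Icc 0 S, 0 ≤ F t) (hgpos : ∀ t ∈ Icc 0 S, 0 ≤ g t)
    (hineq : ∀ t ∈ Icc 0 S,
      F t ≤ 2 * σ2 * (∫ s in 0..t, F s) + (∫ s in 0..t, g s * √(2 * F s)) + K) :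
    ∀ t ∈ Icc 0 S, √(F t) ≤ (1 / √2) * (∫ s in 0..t, exp (σ2 * (t - s)) * g s)
        + exp (σ2 * t) * √K := by
  set G : ℝ → ℝ := fun s => g s * √(2 * F s)
  have hG : Continuous G := by fun_prop
  set ψ : ℝ → ℝ := fun t => 2 * σ2 * (∫ s in 0..t, F s) + (∫ s in 0..t, G s) + K
  have hψ' : ∀ t, HasDerivAt ψ (2 * σ2 * F t + G t) t := fun t =>
    (((integral_hasDerivAt_right (hF.intervalIntegrable 0 t)
      hF.stronglyMeasurable.stronglyMeasurableAtFilter hF.continuousAt).const_mul (2 * σ2)).add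
      (integral_hasDerivAt_right (hG.intervalIntegrable 0 t)
        hG.stronglyMeasurable.stronglyMeasurableAtFilter hG.continuousAt)).add_const K
  have hψpos : ∀ t ∈ Icc 0 S, 0 < ψ t := by
    intro t ht
    have hFint : 0 ≤ ∫ s in 0..t, F s :=
      integral_nonneg ht.1 fun s hs => hFpos s ⟨hs.1, hs.2.trans ht.2⟩
    have hGint : 0 ≤ ∫ s in 0..t, G s :=
      integral_nonneg ht.1 fun s hs => mul_nonneg (hgpos s ⟨hs.1, hs.2.trans ht.2⟩) (sqrt_nonneg _)
    have : 0 ≤ 2 * σ2 * ∫ s in 0..t, F s := by positivity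
    linarith
  have hcmp := le_exp_mul_add_integral_of_hasDerivAt_le (u := fun t => √(ψ t))
    (c := σ2) (h := fun s => g s / √2) (by fun_prop)
    (fun t ht => (hψ' t).sqrt (hψpos t ht).ne')
    (fun t ht => div_two_sqrt_le_of_le hσ (hgpos t ht) (hψpos t ht) (hineq t ht))
  intro t ht
  have hψt := hcmp t ht
  have hint : ∫ s in 0..t, exp (σ2 * (t - s)) * (g s / √2)
      = (1 / √2) * ∫ s in 0..t, exp (σ2 * (t - s)) * g s := by
    rw [← integral_const_mul]
    exact integral_congr fun s _ => by ring
  simp only [ψ, integral_same, mul_zero, add_zero, zero_add, sub_zero, hint] at hψt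
  linarith [sqrt_le_sqrt (hineq t ht)]

theorem stmt_4_general (S σ2 K : ℝ) (hσ : 0 ≤ σ2) (hK : 0 ≤ K) (F g : ℝ → ℝ)
    (hF : Continuous F) (hg : Continuous g)
    (hFpos : ∀ t ∈ Set.Icc (0:ℝ) S, 0 ≤ F t)
    (hgpos : ∀ t ∈ Set.Icc (0:ℝ) S, 0 ≤ g t)
    (hineq : ∀ t ∈ Set.Icc (0:ℝ) S,
      F t ≤ 2 * σ2 * (∫ s in (0:ℝ)..t, F s) + (∫ s in (0:ℝ)..t, g s * Real.sqrt (2 * F s)) + K) :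
    ∀ t ∈ Set.Icc (0:ℝ) S,
      Real.sqrt (F t) ≤ (1 / Real.sqrt 2) * (∫ s in (0:ℝ)..t, Real.exp (σ2 * (t - s)) * g s)
        + Real.exp (σ2 * t) * Real.sqrt K := by
  intro t ht
  set I := ∫ s in (0:ℝ)..t, exp (σ2 * (t - s)) * g s
  have hlim : Tendsto (fun ε => (1 / √2) * I + exp (σ2 * t) * √(K + ε)) (𝓝[>] 0)
      (𝓝 ((1 / √2) * I + exp (σ2 * t) * √K)) := by
    have hc : Continuous fun ε => (1 / √2) * I + exp (σ2 * t) * √(K + ε) := by fun_prop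
    simpa using (hc.tendsto 0).mono_left nhdsWithin_le_nhds
  refine ge_of_tendsto hlim (eventually_nhdsWithin_of_forall fun ε (hε : 0 < ε) => ?_)
  exact sqrt_le_of_le_integral_of_pos hσ (by linarith) hF hg hFpos hgpos
    (fun s hs => by linarith [hineq s hs]) t ht

theorem stmt_4 (S σ2 K : ℝ) (hS : 0 ≤ S) (hσ : 0 ≤ σ2) (hK : 0 ≤ K) (F g : ℝ → ℝ)
    (hF : Continuous F) (hg : Continuous g)
    (hFpos : ∀ t ∈ Set.Icc (0:ℝ) S, 0 ≤ F t)
    (hgpos : ∀ t ∈ Set.Icc (0:ℝ) S, 0 ≤ g t)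
    (hineq : ∀ t ∈ Set.Icc (0:ℝ) S,
      F t ≤ 2 * σ2 * (∫ s in (0:ℝ)..t, F s) + (∫ s in (0:ℝ)..t, g s * Real.sqrt (2 * F s)) + K) :
    ∀ t ∈ Set.Icc (0:ℝ) S,
      Real.sqrt (F t) ≤ (1 / Real.sqrt 2) * (∫ s in (0:ℝ)..t, Real.exp (σ2 * (t - s)) * g s)
        + Real.exp (σ2 * t) * Real.sqrt K :=
  stmt_4_general S σ2 K hσ hK F g hF hg hFpos hgpos hineq
end

section
/- Let F, g : [0,S] → ℝ be continuous nonnegative functions and K ≥ 0 a constant such that F(t) ≤ ∫₀ᵗ g(s) √(2 F(s)) ds + K for all t ∈ [0,S]. Then √(F(t)) ≤ (1/√2) ∫₀ᵗ g(s) ds + √K for all t ∈ [0,S]. -/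
/-!
Put `G t = K + ∫₀ᵗ g √F`, so that `F ≤ G` and `G' = g √F ≤ g √G`. For `K > 0` the function `G`
stays positive, hence `√G` is differentiable with `(√G)' = G' / (2 √G) ≤ g / 2`, and integrating
gives `√F ≤ √G ≤ √K + ½ ∫₀ᵗ g`. The case `K = 0` follows by replacing `K` with `K + ε²`.
The theorem is the case of the weight `√2 g`, since `√(2F) = √2 √F`.
-/

open Set intervalIntegral

theorem sqrt_le_sqrt_add_integral_of_hasDerivAt_le {G G' h : ℝ → ℝ} {a b : ℝ} (hab : a ≤ b)
    (hh : Continuous h) (hGc : ContinuousOn G (Icc a b))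
    (hG : ∀ t ∈ Ioo a b, HasDerivAt G (G' t) t) (hpos : ∀ t ∈ Ioo a b, 0 < G t)
    (hG' : ∀ t ∈ Ioo a b, G' t ≤ 2 * h t * √(G t)) :
    √(G b) ≤ √(G a) + ∫ t in a..b, h t := by
  have hanti : AntitoneOn (fun t => √(G t) - ∫ s in a..t, h s) (Icc a b) := by
    refine antitoneOn_of_hasDerivWithinAt_nonpos (convex_Icc a b)
      (hGc.sqrt.sub (continuous_primitive hh.intervalIntegrable a).continuousOn)
      (f' := fun t => G' t / (2 * √(G t)) - h t) (fun t ht => ?_) (fun t ht => ?_)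
    all_goals rw [interior_Icc] at ht
    · exact (((hG t ht).sqrt (hpos t ht).ne').sub
        (hh.integral_hasStrictDerivAt a t).hasDerivAt).hasDerivWithinAt
    · have hsqrt : 0 < 2 * √(G t) := by positivity [hpos t ht]
      rw [sub_nonpos, div_le_iff₀ hsqrt]
      linarith [hG' t ht]
  have hba := hanti (left_mem_Icc.2 hab) (right_mem_Icc.2 hab) hab
  simp only [integral_same, sub_zero] at hba
  linarith

theorem sqrt_le_sqrt_add_half_integral_of_le_integral_mul_sqrt_of_pos {F g : ℝ → ℝ} {a b K : ℝ}
    (hab : a ≤ b) (hK : 0 < K) (hF : Continuous F) (hg : Continuous g)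
    (hg₀ : ∀ s ∈ Icc a b, 0 ≤ g s)
    (hFle : ∀ s ∈ Icc a b, F s ≤ K + ∫ u in a..s, g u * √(F u)) :
    √(F b) ≤ √K + (∫ s in a..b, g s) / 2 := by
  set G : ℝ → ℝ := fun t => K + ∫ u in a..t, g u * √(F u)
  have hcont : Continuous fun u => g u * √(F u) := hg.mul hF.sqrt
  have hG : ∀ t, HasDerivAt G (g t * √(F t)) t := fun t =>
    (hcont.integral_hasStrictDerivAt a t).hasDerivAt.const_add K
  have hGpos : ∀ t ∈ Icc a b, 0 < G t := fun t ht => by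
    have : 0 ≤ ∫ u in a..t, g u * √(F u) := integral_nonneg ht.1 fun u hu =>
      mul_nonneg (hg₀ u ⟨hu.1, hu.2.trans ht.2⟩) (Real.sqrt_nonneg _)
    positivity
  have hG' : ∀ t ∈ Icc a b, g t * √(F t) ≤ 2 * (g t / 2) * √(G t) := fun t ht => by
    rw [mul_div_cancel₀ _ two_ne_zero]
    exact mul_le_mul_of_nonneg_left (Real.sqrt_le_sqrt (hFle t ht)) (hg₀ t ht)
  have key := sqrt_le_sqrt_add_integral_of_hasDerivAt_le hab (hg.div_const 2)
    (continuous_iff_continuousAt.2 fun t => (hG t).continuousAt).continuousOn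
    (fun t _ => hG t) (fun t ht => hGpos t (Ioo_subset_Icc_self ht))
    (fun t ht => hG' t (Ioo_subset_Icc_self ht))
  calc √(F b) ≤ √(G b) := Real.sqrt_le_sqrt (hFle b (right_mem_Icc.2 hab))
    _ ≤ √(G a) + ∫ t in a..b, g t / 2 := key
    _ = √K + (∫ s in a..b, g s) / 2 := by simp [G, integral_div]

theorem sqrt_le_sqrt_add_half_integral_of_le_integral_mul_sqrt {F g : ℝ → ℝ} {a b K : ℝ}
    (hab : a ≤ b) (hK : 0 ≤ K) (hF : Continuous F) (hg : Continuous g)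
    (hg₀ : ∀ s ∈ Icc a b, 0 ≤ g s)
    (hFle : ∀ s ∈ Icc a b, F s ≤ K + ∫ u in a..s, g u * √(F u)) :
    √(F b) ≤ √K + (∫ s in a..b, g s) / 2 := by
  refine le_of_forall_pos_le_add fun ε hε => ?_
  have hperturbed := sqrt_le_sqrt_add_half_integral_of_le_integral_mul_sqrt_of_pos hab
    (by positivity : 0 < K + ε ^ 2) hF hg hg₀ fun s hs => by linarith [hFle s hs, sq_nonneg ε]
  have hsqrt : √(K + ε ^ 2) ≤ √K + ε :=
    Real.sqrt_le_iff.2 ⟨by positivity, by nlinarith [Real.sq_sqrt hK, Real.sqrt_nonneg K]⟩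
  linarith

theorem stmt_5_general (S K : ℝ) (hK : 0 ≤ K) (F g : ℝ → ℝ)
    (hF : Continuous F) (hg : Continuous g)
    (hgpos : ∀ t ∈ Set.Icc (0:ℝ) S, 0 ≤ g t)
    (hineq : ∀ t ∈ Set.Icc (0:ℝ) S,
      F t ≤ (∫ s in (0:ℝ)..t, g s * Real.sqrt (2 * F s)) + K) :
    ∀ t ∈ Set.Icc (0:ℝ) S,
      Real.sqrt (F t) ≤ (1 / Real.sqrt 2) * (∫ s in (0:ℝ)..t, g s) + Real.sqrt K := by
  intro t ht
  have hsub : Icc 0 t ⊆ Icc 0 S := Icc_subset_Icc_right ht.2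
  have hweight : (fun s => g s * √(2 * F s)) = fun s => √2 * g s * √(F s) := by
    funext s
    rw [Real.sqrt_mul zero_le_two]
    ring
  have h := sqrt_le_sqrt_add_half_integral_of_le_integral_mul_sqrt ht.1 hK hF
    (g := fun s => √2 * g s) (continuous_const.mul hg)
    (fun s hs => mul_nonneg (Real.sqrt_nonneg 2) (hgpos s (hsub hs)))
    fun s hs => by linarith [hweight ▸ hineq s (hsub hs)]
  rwa [integral_const_mul, mul_div_right_comm, Real.sqrt_div_self', add_comm] at h

theorem stmt_5 (S K : ℝ) (hS : 0 ≤ S) (hK : 0 ≤ K) (F g : ℝ → ℝ)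
    (hF : Continuous F) (hg : Continuous g)
    (hFpos : ∀ t ∈ Set.Icc (0:ℝ) S, 0 ≤ F t)
    (hgpos : ∀ t ∈ Set.Icc (0:ℝ) S, 0 ≤ g t)
    (hineq : ∀ t ∈ Set.Icc (0:ℝ) S,
      F t ≤ (∫ s in (0:ℝ)..t, g s * Real.sqrt (2 * F s)) + K) :
    ∀ t ∈ Set.Icc (0:ℝ) S,
      Real.sqrt (F t) ≤ (1 / Real.sqrt 2) * (∫ s in (0:ℝ)..t, g s) + Real.sqrt K :=
  stmt_5_general S K hK F g hF hg hgpos hineq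
end

section
/- Let I : [0,L] × [0,∞) → ℝ be continuously differentiable with I(x,t) ≥ 0 everywhere, I(x,0) = 0 for all x, and suppose there is c > 0 such that |∂I/∂t(x,t)| + c ∂I/∂x(x,t) ≤ 0 for all (x,t) ∈ (0,L) × (0,∞). Then I(x,t) = 0 whenever x > c t. -/
/-!
Along the characteristic `s ↦ (x - c (t - s), s)` through `(x, t)` the derivative of `I` is
`c ∂ₓI + ∂ₜI ≤ c ∂ₓI + |∂ₜI| ≤ 0`, so `I` does not increase along it. When `x > c t` the
characteristic starts inside `[0, L]` at time `0`, where `I` vanishes; hence `0 ≤ I x t ≤ 0`.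
-/

open Set

section PartialDerivatives

variable {𝕜 G : Type*} [NontriviallyNormedField 𝕜] [NormedAddCommGroup G] [NormedSpace 𝕜 G]
  {F : 𝕜 × 𝕜 → G} {p : 𝕜 × 𝕜}

theorem HasFDerivAt.hasDerivAt_fst_slice {F' : 𝕜 × 𝕜 →L[𝕜] G} (hF : HasFDerivAt F F' p) :
    HasDerivAt (fun y => F (y, p.2)) (F' (1, 0)) p.1 :=
  hF.comp_hasDerivAt p.1 ((hasDerivAt_id p.1).prodMk (hasDerivAt_const p.1 p.2))

theorem HasFDerivAt.hasDerivAt_snd_slice {F' : 𝕜 × 𝕜 →L[𝕜] G} (hF : HasFDerivAt F F' p) :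
    HasDerivAt (fun s => F (p.1, s)) (F' (0, 1)) p.2 :=
  hF.comp_hasDerivAt p.2 ((hasDerivAt_const p.2 p.1).prodMk (hasDerivAt_id p.2))

theorem DifferentiableAt.hasDerivAt_comp_line {x₀ c s : 𝕜}
    (hF : DifferentiableAt 𝕜 F (x₀ + c * s, s)) :
    HasDerivAt (fun s => F (x₀ + c * s, s))
      (c • deriv (fun y => F (y, s)) (x₀ + c * s) + deriv (fun τ => F (x₀ + c * s, τ)) s) s := by
  have hline : HasDerivAt (fun s => (x₀ + c * s, s)) ((c, 1) : 𝕜 × 𝕜) s := by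
    simpa using ((hasDerivAt_id s).const_mul c |>.const_add x₀).prodMk (hasDerivAt_id s)
  have hsplit : ((c, 1) : 𝕜 × 𝕜) = c • ((1 : 𝕜), (0 : 𝕜)) + ((0 : 𝕜), (1 : 𝕜)) := by simp
  rw [hF.hasFDerivAt.hasDerivAt_fst_slice.deriv, hF.hasFDerivAt.hasDerivAt_snd_slice.deriv,
    ← map_smul, ← map_add, ← hsplit]
  exact hF.hasFDerivAt.comp_hasDerivAt (f := fun s => (x₀ + c * s, s)) s hline

end PartialDerivatives

theorem antitoneOn_comp_line_of_abs_deriv_add_mul_deriv_nonpos {I : ℝ → ℝ → ℝ} {x₀ c T : ℝ}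
    (hI : Differentiable ℝ (fun p : ℝ × ℝ => I p.1 p.2))
    (hineq : ∀ s ∈ Ioo 0 T,
      |deriv (fun τ => I (x₀ + c * s) τ) s| + c * deriv (fun y => I y s) (x₀ + c * s) ≤ 0) :
    AntitoneOn (fun s => I (x₀ + c * s) s) (Icc 0 T) := by
  have hderiv s := (hI (x₀ + c * s, s)).hasDerivAt_comp_line
  refine antitoneOn_of_deriv_nonpos (convex_Icc 0 T) (HasDerivAt.continuousOn fun s _ => hderiv s)
    (fun s _ => (hderiv s).differentiableAt.differentiableWithinAt) fun s hs => ?_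
  rw [interior_Icc] at hs
  rw [(hderiv s).deriv, smul_eq_mul]
  linarith [hineq s hs, le_abs_self (deriv (fun τ => I (x₀ + c * s) τ) s)]

theorem stmt_7_general (L c : ℝ) (hc : 0 < c) (I : ℝ → ℝ → ℝ)
    (hsmooth : ContDiff ℝ 1 (fun p : ℝ × ℝ => I p.1 p.2))
    (hpos : ∀ x ∈ Set.Icc (0:ℝ) L, ∀ t ≥ (0:ℝ), 0 ≤ I x t)
    (hinit : ∀ x ∈ Set.Icc (0:ℝ) L, I x 0 = 0)
    (hineq : ∀ x ∈ Set.Ioo (0:ℝ) L, ∀ t > (0:ℝ),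
      |deriv (fun s => I x s) t| + c * deriv (fun y => I y t) x ≤ 0) :
    ∀ x ∈ Set.Icc (0:ℝ) L, ∀ t ≥ (0:ℝ), x > c * t → I x t = 0 := by
  intro x hx t ht hxt
  set x₀ := x - c * t
  have hanti : AntitoneOn (fun s => I (x₀ + c * s) s) (Icc 0 t) := by
    refine antitoneOn_comp_line_of_abs_deriv_add_mul_deriv_nonpos
      (hsmooth.differentiable one_ne_zero) fun s hs => hineq _ ⟨?_, ?_⟩ s hs.1
    · nlinarith [hs.1]
    · nlinarith [hs.2, hx.2]
  have hle := hanti (left_mem_Icc.mpr ht) (right_mem_Icc.mpr ht) ht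
  have h0 := hinit x₀ ⟨by linarith, by nlinarith [hx.2]⟩
  simp only [mul_zero, add_zero, x₀, sub_add_cancel] at hle h0
  linarith [hpos x hx t ht]

theorem stmt_7 (L c : ℝ) (hL : 0 < L) (hc : 0 < c) (I : ℝ → ℝ → ℝ)
    (hsmooth : ContDiff ℝ 1 (fun p : ℝ × ℝ => I p.1 p.2))
    (hpos : ∀ x ∈ Set.Icc (0:ℝ) L, ∀ t ≥ (0:ℝ), 0 ≤ I x t)
    (hinit : ∀ x ∈ Set.Icc (0:ℝ) L, I x 0 = 0)
    (hineq : ∀ x ∈ Set.Ioo (0:ℝ) L, ∀ t > (0:ℝ),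
      |deriv (fun s => I x s) t| + c * deriv (fun y => I y t) x ≤ 0) :
    ∀ x ∈ Set.Icc (0:ℝ) L, ∀ t ≥ (0:ℝ), x > c * t → I x t = 0 :=
  stmt_7_general L c hc I hsmooth hpos hinit hineq
end
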